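/- In the setting of the previous statement (gates f, iGate, g and cell state c w i = (f w i)·(cprev w i) + (iGate w i)·(g w i), with ψ and k as defined there), additionally let Wo : ℝ → Matrix (Fin n) (Fin k) ℝ have entrywise derivative Eo at w₀, bo : Fin n → ℝ, define the output gate o w i = σ(((Wo w).mulVec (v w)) i + bo i) and the hidden state h w i = (o w i)·tanh(c w i). Write Δc = diag(o w₀ ⊙ (1 − tanh(c w₀)²)) and Δo = diag(o w₀ ⊙ (1 − o w₀) ⊙ tanh(c w₀)) (all operations entrywise), and set F̃ = Δc ⬝ diag(f w₀), ψ̃ = Δo ⬝ (Wo w₀) + Δc ⬝ ψ, and k̃ = Δo.mulVec (Eo.mulVec (v w₀)) + Δc.mulVec k. Then for every i, the function w ↦ h w i has derivative (F̃.mulVec c') i + (ψ̃.mulVec v') i + k̃ i at w₀. -/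

import Mathlib

noncomputable def sigmoid (x : ℝ) : ℝ := 1 / (1 + Real.exp (-x))

/-!
Every gate is an activation applied to an affine pre-activation `W w *ᵥ v w + b`, whose
derivative is `E *ᵥ v w₀ + W w₀ *ᵥ v'` by the product rule; the activations satisfy
`σ' = σ (1 - σ)` and `tanh' = 1 - tanh²`. The product and chain rules then give the derivative
of `c = f cprev + iGate g` in the form `f c' + ψ v' + k` of the previous corollary, and of
`h = o tanh c`, which regroups into `F̃ c' + ψ̃ v' + k̃` because all the coefficient matrices
multiplying `W w₀`, `E` and `c'` are diagonal.
-/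

open Matrix

theorem sigmoid_eq_real_sigmoid : sigmoid = Real.sigmoid := by
  funext x
  rw [sigmoid, Real.sigmoid_def, one_div]

theorem hasDerivAt_sigmoid (x : ℝ) : HasDerivAt sigmoid (sigmoid x * (1 - sigmoid x)) x := by
  rw [sigmoid_eq_real_sigmoid]
  exact Real.hasDerivAt_sigmoid x

theorem Real.hasDerivAt_tanh (x : ℝ) : HasDerivAt Real.tanh (1 - Real.tanh x ^ 2) x := by
  have hcosh : Real.cosh x ≠ 0 := (Real.cosh_pos x).ne'
  have hquot := (Real.hasDerivAt_sinh x).div (Real.hasDerivAt_cosh x) hcosh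
  rw [show Real.tanh = Real.sinh / Real.cosh from funext Real.tanh_eq_sinh_div_cosh]
  refine hquot.congr_deriv ?_
  rw [Pi.div_apply, div_pow]
  field_simp

section

variable {𝕜 : Type*} [NontriviallyNormedField 𝕜] {m n : Type*} [Fintype n] {x : 𝕜}

theorem HasDerivAt.dotProduct {u v : 𝕜 → n → 𝕜} {u' v' : n → 𝕜}
    (hu : ∀ j, HasDerivAt (fun x => u x j) (u' j) x)
    (hv : ∀ j, HasDerivAt (fun x => v x j) (v' j) x) :
    HasDerivAt (fun x => u x ⬝ᵥ v x) (u' ⬝ᵥ v x + u x ⬝ᵥ v') x := by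
  simp only [_root_.dotProduct, ← Finset.sum_add_distrib]
  exact HasDerivAt.fun_sum fun j _ => (hu j).mul (hv j)

theorem HasDerivAt.mulVec_apply {W : 𝕜 → Matrix m n 𝕜} {E : Matrix m n 𝕜}
    {v : 𝕜 → n → 𝕜} {v' : n → 𝕜}
    (hW : ∀ i j, HasDerivAt (fun x => W x i j) (E i j) x)
    (hv : ∀ j, HasDerivAt (fun x => v x j) (v' j) x) (i : m) :
    HasDerivAt (fun x => (W x *ᵥ v x) i) ((E *ᵥ v x) i + (W x *ᵥ v') i) x :=
  HasDerivAt.dotProduct (hW i) hv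

theorem hasDerivAt_gate {σ σ' : 𝕜 → 𝕜} {a : 𝕜 → m → 𝕜} {W : 𝕜 → Matrix m n 𝕜}
    {E : Matrix m n 𝕜} {v : 𝕜 → n → 𝕜} {v' : n → 𝕜} {b : m → 𝕜}
    (ha : ∀ x i, a x i = σ ((W x *ᵥ v x) i + b i))
    (hσ : ∀ y, HasDerivAt σ (σ' (σ y)) y)
    (hW : ∀ i j, HasDerivAt (fun x => W x i j) (E i j) x)
    (hv : ∀ j, HasDerivAt (fun x => v x j) (v' j) x) (i : m) :
    HasDerivAt (fun x => a x i) (σ' (a x i) * ((E *ᵥ v x) i + (W x *ᵥ v') i)) x := by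
  rw [ha]
  have hpre := (HasDerivAt.mulVec_apply hW hv i).add_const (b i)
  exact ((hσ _).comp x hpre).congr_of_eventuallyEq (.of_forall fun x => ha x i)

end

theorem diagonal_mul_mulVec_apply {m n R : Type*} [Fintype m] [Fintype n] [DecidableEq m]
    [NonUnitalSemiring R] (d : m → R) (W : Matrix m n R) (u : n → R) (i : m) :
    ((diagonal d * W) *ᵥ u) i = d i * (W *ᵥ u) i := by
  rw [← mulVec_mulVec, mulVec_diagonal]

theorem lstm_hidden_state_recursion_hasDerivAt_general
    (n k : ℕ) (w₀ : ℝ)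
    (Wf Wi Wg Wo : ℝ → Matrix (Fin n) (Fin k) ℝ)
    (Ef Ei Eg Eo : Matrix (Fin n) (Fin k) ℝ)
    (hWf : ∀ i j, HasDerivAt (fun w => Wf w i j) (Ef i j) w₀)
    (hWi : ∀ i j, HasDerivAt (fun w => Wi w i j) (Ei i j) w₀)
    (hWg : ∀ i j, HasDerivAt (fun w => Wg w i j) (Eg i j) w₀)
    (hWo : ∀ i j, HasDerivAt (fun w => Wo w i j) (Eo i j) w₀)
    (bf bi bg bo : Fin n → ℝ)
    (v : ℝ → Fin k → ℝ) (v' : Fin k → ℝ)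
    (hv : ∀ j, HasDerivAt (fun w => v w j) (v' j) w₀)
    (cprev : ℝ → Fin n → ℝ) (c' : Fin n → ℝ)
    (hcprev : ∀ i, HasDerivAt (fun w => cprev w i) (c' i) w₀)
    (f iGate g o c h : ℝ → Fin n → ℝ)
    (hf : ∀ w i, f w i = sigmoid (((Wf w).mulVec (v w)) i + bf i))
    (hi : ∀ w i, iGate w i = sigmoid (((Wi w).mulVec (v w)) i + bi i))
    (hg : ∀ w i, g w i = Real.tanh (((Wg w).mulVec (v w)) i + bg i))
    (ho : ∀ w i, o w i = sigmoid (((Wo w).mulVec (v w)) i + bo i))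
    (hc : ∀ w i, c w i = f w i * cprev w i + iGate w i * g w i)
    (hh : ∀ w i, h w i = o w i * Real.tanh (c w i))
    (ψ : Matrix (Fin n) (Fin k) ℝ) (kvec : Fin n → ℝ)
    (hψ : ψ =
        Matrix.diagonal (fun j => f w₀ j * (1 - f w₀ j) * cprev w₀ j) * Wf w₀
      + Matrix.diagonal (fun j => (1 - (g w₀ j) ^ 2) * iGate w₀ j) * Wg w₀
      + Matrix.diagonal (fun j => iGate w₀ j * (1 - iGate w₀ j) * g w₀ j) * Wi w₀)
    (hkvec : kvec =
        (Matrix.diagonal (fun j => f w₀ j * (1 - f w₀ j) * cprev w₀ j)).mulVec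
          (Ef.mulVec (v w₀))
      + (Matrix.diagonal (fun j => (1 - (g w₀ j) ^ 2) * iGate w₀ j)).mulVec
          (Eg.mulVec (v w₀))
      + (Matrix.diagonal (fun j => iGate w₀ j * (1 - iGate w₀ j) * g w₀ j)).mulVec
          (Ei.mulVec (v w₀)))
    (Δc Δo : Matrix (Fin n) (Fin n) ℝ)
    (hΔc : Δc = Matrix.diagonal (fun j => o w₀ j * (1 - Real.tanh (c w₀ j) ^ 2)))
    (hΔo : Δo = Matrix.diagonal (fun j => o w₀ j * (1 - o w₀ j) * Real.tanh (c w₀ j)))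
    (F' : Matrix (Fin n) (Fin n) ℝ) (ψ' : Matrix (Fin n) (Fin k) ℝ) (kvec' : Fin n → ℝ)
    (hF' : F' = Δc * Matrix.diagonal (f w₀))
    (hψ' : ψ' = Δo * Wo w₀ + Δc * ψ)
    (hkvec' : kvec' = Δo.mulVec (Eo.mulVec (v w₀)) + Δc.mulVec kvec) :
    ∀ i, HasDerivAt (fun w => h w i)
      ((F'.mulVec c') i + (ψ'.mulVec v') i + kvec' i) w₀ := by
  intro i
  have hf' := hasDerivAt_gate (σ' := fun s => s * (1 - s)) hf hasDerivAt_sigmoid hWf hv i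
  have hi' := hasDerivAt_gate (σ' := fun s => s * (1 - s)) hi hasDerivAt_sigmoid hWi hv i
  have hg' := hasDerivAt_gate (σ' := fun t => 1 - t ^ 2) hg Real.hasDerivAt_tanh hWg hv i
  have ho' := hasDerivAt_gate (σ' := fun s => s * (1 - s)) ho hasDerivAt_sigmoid hWo hv i
  have hc' : HasDerivAt (fun w => c w i) (f w₀ i * c' i + (ψ *ᵥ v') i + kvec i) w₀ := by
    refine (((hf'.mul (hcprev i)).add (hi'.mul hg')).congr_of_eventuallyEq
      (.of_forall fun w => hc w i)).congr_deriv ?_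
    subst hψ hkvec
    simp only [add_mulVec, Pi.add_apply, diagonal_mul_mulVec_apply, mulVec_diagonal]
    ring
  refine ((ho'.mul ((Real.hasDerivAt_tanh _).comp w₀ hc')).congr_of_eventuallyEq
    (.of_forall fun w => hh w i)).congr_deriv ?_
  subst hF' hψ' hkvec' hΔc hΔo
  simp only [add_mulVec, Pi.add_apply, diagonal_mul_mulVec_apply, mulVec_diagonal,
    Function.comp_apply]
  ring

/-- Corollary 3 of the paper: derivative of the LSTM hidden state
`h w i = o w i * tanh (c w i)` with cell state
`c w i = f w i * cprev w i + iGate w i * g w i`, expressed as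
`dh/dw = F̃ ⬝ c' + ψ̃ ⬝ v' + k̃`. -/
theorem lstm_hidden_state_recursion_hasDerivAt
    (n k : ℕ) (hn : 0 < n) (hk : 0 < k) (w₀ : ℝ)
    (Wf Wi Wg Wo : ℝ → Matrix (Fin n) (Fin k) ℝ)
    (Ef Ei Eg Eo : Matrix (Fin n) (Fin k) ℝ)
    (hWf : ∀ i j, HasDerivAt (fun w => Wf w i j) (Ef i j) w₀)
    (hWi : ∀ i j, HasDerivAt (fun w => Wi w i j) (Ei i j) w₀)
    (hWg : ∀ i j, HasDerivAt (fun w => Wg w i j) (Eg i j) w₀)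
    (hWo : ∀ i j, HasDerivAt (fun w => Wo w i j) (Eo i j) w₀)
    (bf bi bg bo : Fin n → ℝ)
    (v : ℝ → Fin k → ℝ) (v' : Fin k → ℝ)
    (hv : ∀ j, HasDerivAt (fun w => v w j) (v' j) w₀)
    (cprev : ℝ → Fin n → ℝ) (c' : Fin n → ℝ)
    (hcprev : ∀ i, HasDerivAt (fun w => cprev w i) (c' i) w₀)
    (f iGate g o c h : ℝ → Fin n → ℝ)
    (hf : ∀ w i, f w i = sigmoid (((Wf w).mulVec (v w)) i + bf i))
    (hi : ∀ w i, iGate w i = sigmoid (((Wi w).mulVec (v w)) i + bi i))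
    (hg : ∀ w i, g w i = Real.tanh (((Wg w).mulVec (v w)) i + bg i))
    (ho : ∀ w i, o w i = sigmoid (((Wo w).mulVec (v w)) i + bo i))
    (hc : ∀ w i, c w i = f w i * cprev w i + iGate w i * g w i)
    (hh : ∀ w i, h w i = o w i * Real.tanh (c w i))
    (ψ : Matrix (Fin n) (Fin k) ℝ) (kvec : Fin n → ℝ)
    (hψ : ψ =
        Matrix.diagonal (fun j => f w₀ j * (1 - f w₀ j) * cprev w₀ j) * Wf w₀
      + Matrix.diagonal (fun j => (1 - (g w₀ j) ^ 2) * iGate w₀ j) * Wg w₀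
      + Matrix.diagonal (fun j => iGate w₀ j * (1 - iGate w₀ j) * g w₀ j) * Wi w₀)
    (hkvec : kvec =
        (Matrix.diagonal (fun j => f w₀ j * (1 - f w₀ j) * cprev w₀ j)).mulVec
          (Ef.mulVec (v w₀))
      + (Matrix.diagonal (fun j => (1 - (g w₀ j) ^ 2) * iGate w₀ j)).mulVec
          (Eg.mulVec (v w₀))
      + (Matrix.diagonal (fun j => iGate w₀ j * (1 - iGate w₀ j) * g w₀ j)).mulVec
          (Ei.mulVec (v w₀)))
    (Δc Δo : Matrix (Fin n) (Fin n) ℝ)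
    (hΔc : Δc = Matrix.diagonal (fun j => o w₀ j * (1 - Real.tanh (c w₀ j) ^ 2)))
    (hΔo : Δo = Matrix.diagonal (fun j => o w₀ j * (1 - o w₀ j) * Real.tanh (c w₀ j)))
    (F' : Matrix (Fin n) (Fin n) ℝ) (ψ' : Matrix (Fin n) (Fin k) ℝ) (kvec' : Fin n → ℝ)
    (hF' : F' = Δc * Matrix.diagonal (f w₀))
    (hψ' : ψ' = Δo * Wo w₀ + Δc * ψ)
    (hkvec' : kvec' = Δo.mulVec (Eo.mulVec (v w₀)) + Δc.mulVec kvec) :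
    ∀ i, HasDerivAt (fun w => h w i)
      ((F'.mulVec c') i + (ψ'.mulVec v') i + kvec' i) w₀ :=
  lstm_hidden_state_recursion_hasDerivAt_general n k w₀ Wf Wi Wg Wo Ef Ei Eg Eo hWf hWi hWg hWo bf
    bi bg bo v v' hv cprev c' hcprev f iGate g o c h hf hi hg ho hc hh ψ kvec hψ hkvec Δc Δo hΔc hΔo
    F' ψ' kvec' hF' hψ' hkvec'
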